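/- arXiv:2603.17080 — 3 statements merged into one kernel-verified Lean document; each statement's English description precedes it below -/
import Mathlib

section
/- Let γ be a real symmetric L×L matrix with γ² = γ, let 1 ≤ ℓ < L, let Π_frag be the orthogonal projector onto span(e₁,…,e_ℓ) (the first ℓ standard basis vectors of ℝ^L), and let m be an integer with m ≥ ℓ and ℓ + m ≤ L. Then full disentanglement can be achieved: there exists a real symmetric L×L matrix Π with Π² = Π, Tr(Π) = ℓ + m, Π Π_frag = Π_frag, and Π γ (I_L − Π) = 0. -/
/-!
Since `γ` is an idempotent, `ℝ^L = range γ ⊕ ker γ`, and every subspace of `range γ` or of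
`ker γ` is `γ`-invariant. Each fragment vector splits as `e = γ e + (1 - γ) e`, so the fragment
lies in `W₁ ⊕ W₀` with `W₁ = γ H_frag ⊆ range γ` and `W₀ = (1 - γ) H_frag ⊆ ker γ`, both of
dimension at most `ℓ`. As `2ℓ ≤ ℓ + m ≤ L`, we can enlarge `W₁` inside `range γ` and `W₀` inside
`ker γ` until the dimensions add up to `ℓ + m`; the orthogonal projector `Π` onto the resulting
`γ`-invariant subspace `U` is the required one. Because `γ` is symmetric, `Uᗮ` is invariant as
well, which is exactly `Π γ (1 - Π) = 0`.
-/

open Matrix Filter Topology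

noncomputable section

/-- The orthogonal projector onto `span(e₁,…,e_ℓ)` in `ℝ^L`. -/
def fragProj (L ℓ : ℕ) : Matrix (Fin L) (Fin L) ℝ :=
  Matrix.diagonal (fun i : Fin L => if (i : ℕ) < ℓ then (1 : ℝ) else 0)

open Module

theorem Submodule.exists_le_le_finrank_eq {K M : Type*} [DivisionRing K] [AddCommGroup M]
    [Module K M] [FiniteDimensional K M] {W E : Submodule K M} (hWE : W ≤ E) {n : ℕ}
    (hWn : finrank K W ≤ n) (hnE : n ≤ finrank K E) :
    ∃ V : Submodule K M, W ≤ V ∧ V ≤ E ∧ finrank K V = n := by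
  induction n with
  | zero => exact ⟨W, le_rfl, hWE, Nat.le_zero.mp hWn⟩
  | succ n ih =>
    obtain hWn | hWn := hWn.lt_or_eq
    · obtain ⟨V, hWV, hVE, hV⟩ := ih (Nat.lt_succ_iff.mp hWn) (Nat.le_of_succ_le hnE)
      obtain ⟨x, hxE, hxV⟩ := SetLike.exists_of_lt (hVE.lt_of_ne (by rintro rfl; omega))
      have hlt : finrank K V < finrank K ↥((K ∙ x) ⊔ V) :=
        Submodule.finrank_lt_finrank_of_lt (Submodule.covBy_span_singleton_sup hxV).lt
      have hle := Submodule.finrank_add_le_finrank_add_finrank (K ∙ x) V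
      rw [finrank_span_singleton (by rintro rfl; exact hxV V.zero_mem)] at hle
      exact ⟨(K ∙ x) ⊔ V, hWV.trans le_sup_right,
        sup_le ((Submodule.span_singleton_le_iff_mem x E).mpr hxE) hVE, by omega⟩
    · exact ⟨W, le_rfl, hWE, hWn⟩

namespace LinearMap.IsIdempotentElem

variable {K M : Type*} [Field K] [AddCommGroup M] [Module K M] {T : Module.End K M}

theorem mem_invtSubmodule_of_le_range (hT : IsIdempotentElem T) {V : Submodule K M}
    (hV : V ≤ range T) : V ∈ T.invtSubmodule := by
  intro x hx
  obtain ⟨y, rfl⟩ := hV hx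
  simpa [Submodule.mem_comap, ← Module.End.mul_apply, hT.eq] using hx

theorem mem_invtSubmodule_of_le_ker {V : Submodule K M} (hV : V ≤ ker T) :
    V ∈ T.invtSubmodule := by
  intro x hx
  simp [Submodule.mem_comap, LinearMap.mem_ker.mp (hV hx)]

theorem exists_mem_invtSubmodule_le_finrank_eq [FiniteDimensional K M]
    (hT : IsIdempotentElem T) (F : Submodule K M) {n : ℕ}
    (hFn : 2 * finrank K F ≤ n) (hn : n ≤ finrank K M) :
    ∃ U ∈ T.invtSubmodule, F ≤ U ∧ finrank K U = n := by
  have hcompl : IsCompl (range T) (ker T) := (isProj_range T hT).isCompl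
  have hdim := Submodule.finrank_add_eq_of_isCompl hcompl
  have hF₁ : F.map T ≤ range T := map_le_range
  have hF₀ : F.map (1 - T) ≤ ker T := by
    rintro _ ⟨x, -, rfl⟩
    simp [← Module.End.mul_apply, hT.eq]
  have hF₁r := Submodule.finrank_mono hF₁
  have hF₀r := Submodule.finrank_mono hF₀
  have hF₁F := Submodule.finrank_map_le T F
  have hF₀F := Submodule.finrank_map_le (1 - T) F
  -- the dimension taken from `range T`; the remaining `n - a` still fits into `ker T`
  set a := min (finrank K (range T)) (n - finrank K (F.map (1 - T)))
  obtain ⟨V₁, hFV₁, hV₁, hV₁a⟩ := Submodule.exists_le_le_finrank_eq hF₁ (n := a)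
    (by omega) (by omega)
  obtain ⟨V₀, hFV₀, hV₀, hV₀a⟩ := Submodule.exists_le_le_finrank_eq hF₀ (n := n - a)
    (by omega) (by omega)
  refine ⟨V₁ ⊔ V₀, Module.End.invtSubmodule.sup_mem (mem_invtSubmodule_of_le_range hT hV₁)
    (mem_invtSubmodule_of_le_ker hV₀), fun x hx => ?_, ?_⟩
  · exact Submodule.mem_sup.mpr ⟨T x, hFV₁ ⟨x, hx, rfl⟩, (1 - T) x, hFV₀ ⟨x, hx, rfl⟩, by simp⟩
  · have hinf : V₁ ⊓ V₀ = ⊥ := (hcompl.disjoint.mono hV₁ hV₀).eq_bot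
    have hsup := Submodule.finrank_sup_add_finrank_inf_eq V₁ V₀
    rw [hinf, finrank_bot] at hsup
    omega

end LinearMap.IsIdempotentElem

theorem LinearMap.IsSymmetric.starProjection_mul_mul_one_sub_eq_zero {𝕜 E : Type*} [RCLike 𝕜]
    [NormedAddCommGroup E] [InnerProductSpace 𝕜 E] {T : Module.End 𝕜 E} (hT : T.IsSymmetric)
    {U : Submodule 𝕜 E} [U.HasOrthogonalProjection] (hU : U ∈ T.invtSubmodule) :
    (U.starProjection : Module.End 𝕜 E) * T * (1 - U.starProjection) = 0 := by
  ext x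
  exact U.starProjection_apply_eq_zero_iff.mpr
    (hT.orthogonalComplement_mem_invtSubmodule hU (U.sub_starProjection_mem_orthogonal x))

theorem Matrix.trace_eq_rank_of_isIdempotentElem {K n : Type*} [Field K] [Fintype n]
    [DecidableEq n] {A : Matrix n n K} (hA : IsIdempotentElem A) : A.trace = A.rank := by
  rw [← trace_toLin'_eq]
  exact (LinearMap.IsIdempotentElem.isProj_range _ (hA.map toLinAlgEquiv')).trace

theorem Matrix.rank_eq_finrank_range_toEuclideanLin {𝕜 m n : Type*} [RCLike 𝕜] [Fintype m]
    [Fintype n] [DecidableEq n] (A : Matrix m n 𝕜) :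
    A.rank = finrank 𝕜 (LinearMap.range (toEuclideanLin A)) :=
  A.rank_eq_finrank_range_toLin (EuclideanSpace.basisFun m 𝕜).toBasis
    (EuclideanSpace.basisFun n 𝕜).toBasis

section starProjectionMatrix

variable {𝕜 n : Type*} [RCLike 𝕜] [Fintype n] [DecidableEq n]

def Submodule.starProjectionMatrix (U : Submodule 𝕜 (EuclideanSpace 𝕜 n)) : Matrix n n 𝕜 :=
  (toEuclideanCLM (𝕜 := 𝕜) (n := n)).symm U.starProjection

namespace Submodule

variable (U : Submodule 𝕜 (EuclideanSpace 𝕜 n))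

@[simp]
theorem toEuclideanCLM_starProjectionMatrix :
    toEuclideanCLM (𝕜 := 𝕜) (n := n) U.starProjectionMatrix = U.starProjection :=
  StarAlgEquiv.apply_symm_apply _ _

theorem isHermitian_starProjectionMatrix : U.starProjectionMatrix.IsHermitian :=
  (isSelfAdjoint_starProjection U).map (toEuclideanCLM (𝕜 := 𝕜) (n := n)).symm

theorem isIdempotentElem_starProjectionMatrix : IsIdempotentElem U.starProjectionMatrix :=
  U.isIdempotentElem_starProjection.map (toEuclideanCLM (𝕜 := 𝕜) (n := n)).symm

theorem trace_starProjectionMatrix : U.starProjectionMatrix.trace = finrank 𝕜 U := by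
  rw [trace_eq_rank_of_isIdempotentElem U.isIdempotentElem_starProjectionMatrix,
    rank_eq_finrank_range_toEuclideanLin, ← coe_toEuclideanCLM_eq_toEuclideanLin,
    toEuclideanCLM_starProjectionMatrix, range_starProjection]

theorem starProjectionMatrix_mul_eq_self {B : Matrix n n 𝕜}
    (hB : LinearMap.range (toEuclideanLin B) ≤ U) : U.starProjectionMatrix * B = B := by
  apply EquivLike.injective (toEuclideanCLM (𝕜 := 𝕜) (n := n))
  rw [map_mul, toEuclideanCLM_starProjectionMatrix]
  ext1 x
  exact U.starProjection_eq_self_iff.mpr (hB ⟨x, rfl⟩)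

theorem starProjectionMatrix_mul_mul_one_sub_eq_zero {A : Matrix n n 𝕜} (hA : A.IsHermitian)
    (hU : U ∈ Module.End.invtSubmodule (toEuclideanLin A)) :
    U.starProjectionMatrix * A * (1 - U.starProjectionMatrix) = 0 := by
  apply EquivLike.injective (toEuclideanCLM (𝕜 := 𝕜) (n := n))
  rw [map_mul, map_mul, map_sub, map_one, map_zero, toEuclideanCLM_starProjectionMatrix]
  have hPAP := (isSymmetric_toEuclideanLin_iff.mpr hA).starProjection_mul_mul_one_sub_eq_zero hU
  ext1 x
  exact LinearMap.congr_fun hPAP x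

end Submodule

end starProjectionMatrix

theorem rank_fragProj_le (L ℓ : ℕ) : (fragProj L ℓ).rank ≤ ℓ := by
  rw [fragProj, rank_diagonal]
  calc _ ≤ Fintype.card (Fin ℓ) :=
        Fintype.card_le_of_injective (fun i => ⟨i.1, by simpa using i.2⟩)
          fun i j h => Subtype.ext (Fin.ext (by simpa using h))
    _ = ℓ := Fintype.card_fin ℓ

theorem stmt_12_general {L ℓ m : ℕ} (hmℓ : ℓ ≤ m) (hLm : ℓ + m ≤ L)
    (γ : Matrix (Fin L) (Fin L) ℝ) (hγs : γ.IsSymm) (hγ : γ * γ = γ) :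
    ∃ Pr : Matrix (Fin L) (Fin L) ℝ,
      Pr.IsSymm ∧ Pr * Pr = Pr ∧ Pr.trace = ((ℓ + m : ℕ) : ℝ) ∧
      Pr * fragProj L ℓ = fragProj L ℓ ∧ Pr * γ * (1 - Pr) = 0 := by
  have hT : IsIdempotentElem (toEuclideanLin γ) :=
    ContinuousLinearMap.IsIdempotentElem.toLinearMap
      (IsIdempotentElem.map (e := γ) hγ (toEuclideanCLM (𝕜 := ℝ) (n := Fin L)))
  set F := LinearMap.range (toEuclideanLin (fragProj L ℓ))
  have hF : finrank ℝ F ≤ ℓ :=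
    rank_eq_finrank_range_toEuclideanLin (fragProj L ℓ) ▸ rank_fragProj_le L ℓ
  obtain ⟨U, hUγ, hFU, hU⟩ := LinearMap.IsIdempotentElem.exists_mem_invtSubmodule_le_finrank_eq
    hT F (n := ℓ + m) (by omega) (by simpa using hLm)
  exact ⟨U.starProjectionMatrix, isHermitian_iff_isSymm.mp U.isHermitian_starProjectionMatrix,
    U.isIdempotentElem_starProjectionMatrix, by rw [U.trace_starProjectionMatrix, hU],
    U.starProjectionMatrix_mul_eq_self hFU,
    U.starProjectionMatrix_mul_mul_one_sub_eq_zero (isHermitian_iff_isSymm.mpr hγs) hUγ⟩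

/-- if `γ² = γ` is a real symmetric `L×L` matrix, `1 ≤ ℓ < L`, `m ≥ ℓ`,
and `ℓ + m ≤ L`, then full disentanglement can be achieved: there exists an orthogonal
projector `Π` of rank `ℓ + m` with `Π Π_frag = Π_frag` and `Π γ (I − Π) = 0`. -/
theorem stmt_12 {L ℓ m : ℕ} (hℓ1 : 1 ≤ ℓ) (hℓL : ℓ < L) (hmℓ : ℓ ≤ m) (hLm : ℓ + m ≤ L)
    (γ : Matrix (Fin L) (Fin L) ℝ) (hγs : γ.IsSymm) (hγ : γ * γ = γ) :
    ∃ Pr : Matrix (Fin L) (Fin L) ℝ,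
      Pr.IsSymm ∧ Pr * Pr = Pr ∧ Pr.trace = ((ℓ + m : ℕ) : ℝ) ∧
      Pr * fragProj L ℓ = fragProj L ℓ ∧ Pr * γ * (1 - Pr) = 0 :=
  stmt_12_general hmℓ hLm γ hγs hγ

end
end

section
/- Let γ be a real symmetric L×L matrix with 0 ⪯ γ ⪯ I, let 1 ≤ ℓ < L, let H_frag = span(e₁,…,e_ℓ) with orthogonal projector Π_frag, and let X be the smallest γ-invariant subspace of ℝ^L containing H_frag. Let m be an integer with 1 ≤ m and ℓ + m ≤ L. Then full disentanglement can be achieved — i.e. there exists a real symmetric Π with Π² = Π, Tr(Π) = ℓ + m, Π Π_frag = Π_frag, and Π γ (I_L − Π) = 0 — if and only if m ≥ dim(X) − ℓ. -/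
/-!
For symmetric `Π` and `γ`, the condition `Π γ (I - Π) = 0` is the transpose of
`(I - Π) γ Π = 0`, which for a projector says exactly that `range Π` is `γ`-invariant. Moreover
`Π Π_frag = Π_frag` says `H_frag ≤ range Π`, and `Tr Π = dim (range Π)`. So full disentanglement
with bath dimension `m` amounts to a `γ`-invariant subspace of dimension `ℓ + m` containing
`H_frag`, and minimality of `X` shows that `dim X ≤ ℓ + m` is necessary. Conversely, the
eigenvectors of the symmetric `γ` span `ℝ^L`, so an invariant subspace other than `ℝ^L` grows by
one dimension when an eigenvector outside it is added; growing `X` this way up to dimension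
`ℓ + m` and taking the orthogonal projector onto the result gives `Π`.
-/

open Matrix Filter Topology

noncomputable section

/-- The fragment subspace `H_frag = span(e₁,…,e_ℓ) ⊆ ℝ^L`. -/
def fragSpace (L ℓ : ℕ) : Submodule ℝ (Fin L → ℝ) :=
  Submodule.span ℝ ((fun i : Fin L => Pi.single i (1 : ℝ)) '' {i : Fin L | (i : ℕ) < ℓ})

open Module Module.End LinearMap

theorem mem_fragSpace_iff {L ℓ : ℕ} {x : Fin L → ℝ} :
    x ∈ fragSpace L ℓ ↔ ∀ i : Fin L, ℓ ≤ i → x i = 0 := by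
  have hb : (fun i : Fin L => Pi.single i (1 : ℝ)) = ⇑(Pi.basisFun ℝ (Fin L)) := by
    funext i; rw [Pi.basisFun_apply]
  rw [fragSpace, hb, Basis.mem_span_image]
  refine ⟨fun h i hi => by_contra fun hx => ?_, fun h i hi => by_contra fun hil => ?_⟩
  · exact absurd (h (by simpa [Pi.basisFun_repr] using hx)) (by simpa using hi)
  · simp only [Finset.mem_coe, Finsupp.mem_support_iff, Pi.basisFun_repr] at hi
    exact hi (h i (not_lt.1 hil))

theorem range_mulVecLin_fragProj (L ℓ : ℕ) :
    range (fragProj L ℓ).mulVecLin = fragSpace L ℓ := by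
  apply le_antisymm
  · rintro _ ⟨x, rfl⟩
    rw [mem_fragSpace_iff]
    intro i hi
    simp [fragProj, Matrix.mulVec_diagonal, not_lt.2 hi]
  · rw [fragSpace, Submodule.span_le]
    rintro _ ⟨i, hi, rfl⟩
    exact ⟨Pi.single i 1, by simp [fragProj, show (i : ℕ) < ℓ from hi]⟩

namespace Matrix

variable {K n : Type*} [Field K] [Fintype n] [DecidableEq n] {P A : Matrix n n K}

theorem IsIdempotentElem.mulVecLin (hP : IsIdempotentElem P) : IsIdempotentElem P.mulVecLin :=
  hP.map toLinAlgEquiv'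

theorem mul_eq_right_iff_range_le (hP : IsIdempotentElem P) {m : Type*} [Fintype m]
    (Q : Matrix n m K) : P * Q = Q ↔ range Q.mulVecLin ≤ range P.mulVecLin := by
  classical
  rw [← LinearMap.IsIdempotentElem.comp_eq_right_iff hP.mulVecLin, ← mulVecLin_mul,
    ← toLin'_apply', ← toLin'_apply', toLin'.injective.eq_iff]

theorem range_mulVecLin_mem_invtSubmodule_iff (hP : IsIdempotentElem P) (hPs : P.IsSymm)
    (hA : A.IsSymm) :
    range P.mulVecLin ∈ invtSubmodule A.mulVecLin ↔ P * A * (1 - P) = 0 := by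
  rw [LinearMap.IsIdempotentElem.range_mem_invtSubmodule_iff hP.mulVecLin, ← mulVecLin_mul,
    ← mulVecLin_mul, ← toLin'_apply', ← toLin'_apply', toLin'.injective.eq_iff, mul_sub,
    mul_one, sub_eq_zero, ← mul_assoc]
  constructor <;> intro h <;>
    simpa [transpose_mul, hPs.eq, hA.eq, mul_assoc] using congrArg transpose h.symm

theorem trace_eq_finrank_range (hP : IsIdempotentElem P) :
    P.trace = finrank K (range P.mulVecLin) := by
  rw [← trace_toLin'_eq, toLin'_apply']
  exact (LinearMap.IsIdempotentElem.isProj_range _ hP.mulVecLin).trace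

end Matrix

namespace LinearMap.IsSymmetric

variable {𝕜 E : Type*} [RCLike 𝕜] [NormedAddCommGroup E] [InnerProductSpace 𝕜 E]
  [FiniteDimensional 𝕜 E] {T : E →ₗ[𝕜] E}

-- The eigenvectors of a symmetric operator span the space.
theorem exists_mem_eigenspace_notMem (hT : T.IsSymmetric) {V : Submodule 𝕜 E} (hV : V ≠ ⊤) :
    ∃ μ, ∃ v ∈ eigenspace T μ, v ∉ V := by
  by_contra! h
  have hsup : (⨆ μ, eigenspace T μ) = ⊤ :=
    Submodule.orthogonal_eq_bot_iff.1 hT.orthogonalComplement_iSup_eigenspaces_eq_bot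
  exact hV (top_le_iff.1 (hsup ▸ iSup_le fun μ v hv => h μ v hv))

theorem exists_mem_invtSubmodule_finrank_succ (hT : T.IsSymmetric) {V : Submodule 𝕜 E}
    (hV : V ∈ invtSubmodule T) (hlt : finrank 𝕜 V < finrank 𝕜 E) :
    ∃ W ∈ invtSubmodule T, V ≤ W ∧ finrank 𝕜 W = finrank 𝕜 V + 1 := by
  obtain ⟨μ, v, hv, hvV⟩ :=
    hT.exists_mem_eigenspace_notMem (V := V) fun h => hlt.ne (by rw [h, finrank_top])
  have hspan : 𝕜 ∙ v ∈ invtSubmodule T := by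
    rw [mem_invtSubmodule, Submodule.span_singleton_le_iff_mem, Submodule.mem_comap,
      mem_eigenspace_iff.1 hv]
    exact Submodule.smul_mem _ _ (Submodule.mem_span_singleton_self v)
  exact ⟨V ⊔ 𝕜 ∙ v, invtSubmodule.sup_mem hV hspan, le_sup_left,
    Submodule.finrank_sup_span_singleton hvV⟩

theorem exists_mem_invtSubmodule_finrank_eq (hT : T.IsSymmetric) {V : Submodule 𝕜 E}
    (hV : V ∈ invtSubmodule T) {k : ℕ} (hVk : finrank 𝕜 V ≤ k) (hk : k ≤ finrank 𝕜 E) :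
    ∃ W ∈ invtSubmodule T, V ≤ W ∧ finrank 𝕜 W = k := by
  induction k, hVk using Nat.le_induction with
  | base => exact ⟨V, hV, le_rfl, rfl⟩
  | succ k _ ih =>
    obtain ⟨W, hW, hVW, rfl⟩ := ih (by omega)
    obtain ⟨W', hW', hWW', hW'k⟩ := hT.exists_mem_invtSubmodule_finrank_succ hW (by omega)
    exact ⟨W', hW', hVW.trans hWW', hW'k⟩

end LinearMap.IsSymmetric

namespace Matrix

variable {n : Type*} [Fintype n] [DecidableEq n]

theorem toEuclideanLin_eq_conj (A : Matrix n n ℝ) :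
    toEuclideanLin A = (WithLp.linearEquiv 2 ℝ (n → ℝ)).symm.conj A.mulVecLin :=
  rfl

theorem IsSymm.exists_mem_invtSubmodule_finrank_eq {A : Matrix n n ℝ} (hA : A.IsSymm)
    {V : Submodule ℝ (n → ℝ)} (hV : V ∈ invtSubmodule A.mulVecLin) {k : ℕ}
    (hVk : finrank ℝ V ≤ k) (hk : k ≤ Fintype.card n) :
    ∃ W ∈ invtSubmodule A.mulVecLin, V ≤ W ∧ finrank ℝ W = k := by
  set e : EuclideanSpace ℝ n ≃ₗ[ℝ] (n → ℝ) := WithLp.linearEquiv 2 ℝ (n → ℝ)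
  have hT : (toEuclideanLin A).IsSymmetric := isSymmetric_toEuclideanLin_iff.2 (by simpa using hA)
  obtain ⟨W, hW, hVW, hWk⟩ := hT.exists_mem_invtSubmodule_finrank_eq
    (toEuclideanLin_eq_conj A ▸ LinearEquiv.map_mem_invtSubmodule_conj_iff.2 hV)
    ((LinearEquiv.finrank_map_eq _ _).trans_le hVk) (by rwa [finrank_euclideanSpace])
  refine ⟨W.map (e : EuclideanSpace ℝ n →ₗ[ℝ] (n → ℝ)),
    LinearEquiv.map_mem_invtSubmodule_iff.2 hW, ?_, ?_⟩
  · rw [Submodule.map_equiv_eq_comap_symm, ← Submodule.map_le_iff_le_comap]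
    exact hVW
  · rw [LinearEquiv.finrank_map_eq, hWk]

end Matrix

theorem Submodule.exists_isSymm_isIdempotentElem_range_eq {n : Type*} [Fintype n]
    [DecidableEq n] (W : Submodule ℝ (n → ℝ)) :
    ∃ P : Matrix n n ℝ, P.IsSymm ∧ IsIdempotentElem P ∧ range P.mulVecLin = W := by
  set e : EuclideanSpace ℝ n ≃ₗ[ℝ] (n → ℝ) := WithLp.linearEquiv 2 ℝ (n → ℝ)
  set U := W.map (e.symm : (n → ℝ) →ₗ[ℝ] EuclideanSpace ℝ n)
  set P := (toLpLinAlgEquiv 2).symm (U.starProjection : Module.End ℝ (EuclideanSpace ℝ n))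
  have hPU : toEuclideanLin P = U.starProjection := (toLpLinAlgEquiv 2).apply_symm_apply _
  have hsymm : (toEuclideanLin P).IsSymmetric := by
    rw [hPU]
    exact U.starProjection_isSymmetric
  refine ⟨P, by simpa using isSymmetric_toEuclideanLin_iff.1 hsymm,
    (ContinuousLinearMap.isIdempotentElem_toLinearMap_iff.2
      U.isIdempotentElem_starProjection).map _, ?_⟩
  have hconj : P.mulVecLin = e.conj (toEuclideanLin P) := rfl
  rw [hconj, hPU, LinearEquiv.conj_apply, LinearMap.range_comp_of_range_eq_top _ e.symm.range,
    LinearMap.range_comp]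
  exact (Submodule.map_symm_eq_iff e).1 (by simp [U])

theorem stmt_15_general {L ℓ m : ℕ} (hLm : ℓ + m ≤ L)
    (γ : Matrix (Fin L) (Fin L) ℝ) (hγs : γ.IsSymm)
    (X : Submodule ℝ (Fin L → ℝ))
    (hXfrag : fragSpace L ℓ ≤ X) (hXinv : Submodule.map γ.mulVecLin X ≤ X)
    (hXmin : ∀ W : Submodule ℝ (Fin L → ℝ),
      fragSpace L ℓ ≤ W → Submodule.map γ.mulVecLin W ≤ W → X ≤ W) :
    (∃ Pr : Matrix (Fin L) (Fin L) ℝ,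
        Pr.IsSymm ∧ Pr * Pr = Pr ∧ Pr.trace = ((ℓ + m : ℕ) : ℝ) ∧
        Pr * fragProj L ℓ = fragProj L ℓ ∧ Pr * γ * (1 - Pr) = 0) ↔
      Module.finrank ℝ ↥X - ℓ ≤ m := by
  rw [Nat.sub_le_iff_le_add']
  constructor
  · rintro ⟨P, hPs, hP, htr, hfrag, hdis⟩
    have hrank : finrank ℝ (range P.mulVecLin) = ℓ + m := by
      exact_mod_cast (trace_eq_finrank_range hP).symm.trans htr
    have hfragP : fragSpace L ℓ ≤ range P.mulVecLin := by
      rw [← range_mulVecLin_fragProj, ← mul_eq_right_iff_range_le hP]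
      exact hfrag
    have hinvP := (range_mulVecLin_mem_invtSubmodule_iff hP hPs hγs).2 hdis
    exact hrank ▸ Submodule.finrank_mono
      (hXmin _ hfragP ((mem_invtSubmodule_iff_map_le _).1 hinvP))
  · intro hX
    obtain ⟨W, hWinv, hXW, hW⟩ := hγs.exists_mem_invtSubmodule_finrank_eq
      ((mem_invtSubmodule_iff_map_le _).2 hXinv) hX (by rwa [Fintype.card_fin])
    obtain ⟨P, hPs, hP, rfl⟩ := W.exists_isSymm_isIdempotentElem_range_eq
    refine ⟨P, hPs, hP, by rw [trace_eq_finrank_range hP, hW], ?_,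
      (range_mulVecLin_mem_invtSubmodule_iff hP hPs hγs).1 hWinv⟩
    rw [mul_eq_right_iff_range_le hP, range_mulVecLin_fragProj]
    exact hXfrag.trans hXW

/-- let `γ` be real symmetric with `0 ⪯ γ ⪯ I`, `H_frag = span(e₁,…,e_ℓ)`,
and `X` the smallest `γ`-invariant subspace containing `H_frag`. For `1 ≤ m` with
`ℓ + m ≤ L`, full disentanglement can be achieved iff `m ≥ dim X − ℓ`. -/
theorem stmt_15 {L ℓ m : ℕ} (hℓ1 : 1 ≤ ℓ) (hℓL : ℓ < L) (hm1 : 1 ≤ m) (hLm : ℓ + m ≤ L)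
    (γ : Matrix (Fin L) (Fin L) ℝ) (hγs : γ.IsSymm)
    (hγpsd : γ.PosSemidef) (hγle : ((1 : Matrix (Fin L) (Fin L) ℝ) - γ).PosSemidef)
    (X : Submodule ℝ (Fin L → ℝ))
    (hXfrag : fragSpace L ℓ ≤ X) (hXinv : Submodule.map γ.mulVecLin X ≤ X)
    (hXmin : ∀ W : Submodule ℝ (Fin L → ℝ),
      fragSpace L ℓ ≤ W → Submodule.map γ.mulVecLin W ≤ W → X ≤ W) :
    (∃ Pr : Matrix (Fin L) (Fin L) ℝ,
        Pr.IsSymm ∧ Pr * Pr = Pr ∧ Pr.trace = ((ℓ + m : ℕ) : ℝ) ∧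
        Pr * fragProj L ℓ = fragProj L ℓ ∧ Pr * γ * (1 - Pr) = 0) ↔
      Module.finrank ℝ ↥X - ℓ ≤ m :=
  stmt_15_general hLm γ hγs X hXfrag hXinv hXmin
end
end

section
/- Let A, B be real symmetric M×M matrices with A positive semidefinite, let D ∈ K, and let P ∈ Gr(m,ℝ^M) be a minimizer of Q ↦ Tr(G(D)Q) over Gr(m,ℝ^M). Then for every α ∈ [0,1], J((1−α)D + αP) ≥ J(P); in other words, the optimal damping step of the ODA applied to the quadratic functional J equals the full step α = 1, so the ODA initialized on Gr(m,ℝ^M) coincides with the Roothaan algorithm. -/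
/-!
Along the segment `D + α (P - D)` the functional `J` is a concave quadratic:
`J (D + α d) = J D + α Tr (G(D) d) - α² / 2 Tr (A d A d)`, and `Tr (A d A d) ≥ 0` because `A ⪰ 0`.
Its slope `Tr (G(D) (P - D))` is nonpositive: in an eigenbasis of `G(D)` the diagonal of `D` is a
weight vector in `[0,1]^M` of total mass `m`, so the projector onto `m` eigenvectors with the
smallest eigenvalues does at least as well as `D`, and hence so does the minimizer `P`.
Then `J (D + α d) - J (D + d) = (1 - α) (-Tr (G(D) d) + (1 + α) / 2 Tr (A d A d)) ≥ 0`.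
-/

open Matrix Filter Topology

noncomputable section

/-- The Grassmann manifold `Gr(m, ℝ^M)`. -/
def Gr (M m : ℕ) (P : Matrix (Fin M) (Fin M) ℝ) : Prop :=
  P.IsSymm ∧ P * P = P ∧ P.trace = (m : ℝ)

/-- `K = CH(Gr(m,ℝ^M))`: symmetric `D` with `0 ⪯ D ⪯ I` and `Tr D = m`. -/
def Kset (M m : ℕ) (D : Matrix (Fin M) (Fin M) ℝ) : Prop :=
  D.PosSemidef ∧ (1 - D).PosSemidef ∧ D.trace = (m : ℝ)

/-- The cost function `J(P) = Tr(BP) - (1/2) Tr(APAP)`. -/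
def Jfun {M : ℕ} (A B P : Matrix (Fin M) (Fin M) ℝ) : ℝ :=
  (B * P).trace - (1 / 2) * (A * P * A * P).trace

/-- The gradient `G(P) = B - APA`. -/
def Gmap {M : ℕ} (A B P : Matrix (Fin M) (Fin M) ℝ) : Matrix (Fin M) (Fin M) ℝ :=
  B - A * P * A

section

variable {ι : Type*} [Fintype ι]

theorem sum_le_sum_mul_of_threshold (f w : ι → ℝ) (hw0 : ∀ i, 0 ≤ w i) (hw1 : ∀ i, w i ≤ 1)
    (S : Finset ι) (hsum : ∑ i, w i = S.card) (c : ℝ) (hS : ∀ j ∈ S, f j ≤ c)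
    (hSc : ∀ i ∉ S, c ≤ f i) :
    ∑ i ∈ S, f i ≤ ∑ i, f i * w i := by
  classical
  have hterm : ∀ i, 0 ≤ (f i - c) * (w i - if i ∈ S then 1 else 0) := fun i => by
    by_cases hi : i ∈ S
    · simp only [hi, if_true]
      exact mul_nonneg_of_nonpos_of_nonpos (by linarith [hS i hi]) (by linarith [hw1 i])
    · simp only [hi, if_false, sub_zero]
      exact mul_nonneg (by linarith [hSc i hi]) (hw0 i)
  have hexpand : ∑ i, (f i - c) * (w i - if i ∈ S then 1 else 0)
      = ∑ i, f i * w i - ∑ i ∈ S, f i - c * (∑ i, w i - S.card) := by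
    simp only [mul_sub, sub_mul, Finset.sum_sub_distrib, mul_ite, mul_one, mul_zero,
      Finset.sum_ite_mem, Finset.univ_inter, ← Finset.mul_sum, Finset.sum_const, nsmul_eq_mul]
    ring
  have hnonneg := Finset.sum_nonneg fun i (_ : i ∈ Finset.univ) => hterm i
  rw [hexpand, hsum, sub_self, mul_zero] at hnonneg
  linarith

theorem exists_card_eq_sum_le_sum_mul (f w : ι → ℝ) (hw0 : ∀ i, 0 ≤ w i)
    (hw1 : ∀ i, w i ≤ 1) {m : ℕ} (hsum : ∑ i, w i = m) :
    ∃ S : Finset ι, S.card = m ∧ ∑ i ∈ S, f i ≤ ∑ i, f i * w i := by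
  classical
  have hm : m ≤ Fintype.card ι := by
    have : (m : ℝ) ≤ Fintype.card ι := by
      simpa [← hsum] using Finset.sum_le_sum fun i (_ : i ∈ Finset.univ) => hw1 i
    exact_mod_cast this
  obtain ⟨S, hSmem, hSmin⟩ := Finset.exists_min_image (Finset.univ.powersetCard m)
    (fun T => ∑ i ∈ T, f i) (Finset.powersetCard_nonempty_of_le (by simpa using hm))
  have hScard : S.card = m := (Finset.mem_powersetCard.1 hSmem).2
  have hexch : ∀ i ∉ S, ∀ j ∈ S, f j ≤ f i := by
    intro i hi j hj
    have hswap := hSmin (insert i (S.erase j)) <| by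
      rw [Finset.mem_powersetCard, Finset.card_insert_of_notMem (by simp [hi]),
        Finset.card_erase_of_mem hj, hScard]
      exact ⟨Finset.subset_univ _, Nat.sub_add_cancel (hScard ▸ Finset.card_pos.2 ⟨j, hj⟩)⟩
    rw [Finset.sum_insert (by simp [hi]), Finset.sum_erase_eq_sub hj] at hswap
    linarith
  obtain ⟨c, hS, hSc⟩ : ∃ c, (∀ j ∈ S, f j ≤ c) ∧ ∀ i ∉ S, c ≤ f i := by
    rcases S.eq_empty_or_nonempty with rfl | hne
    · exact ⟨-∑ i, |f i|, by simp, fun i _ => (neg_le_neg (Finset.single_le_sum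
        (fun k _ => abs_nonneg (f k)) (Finset.mem_univ i))).trans (neg_abs_le _)⟩
    · obtain ⟨j, hj, hmax⟩ := S.exists_max_image f hne
      exact ⟨f j, hmax, fun i hi => hexch i hi j hj⟩
  exact ⟨S, hScard, sum_le_sum_mul_of_threshold f w hw0 hw1 S (by rw [hsum, hScard]) c hS hSc⟩

end

namespace Matrix

variable {n : Type*} [Fintype n] [DecidableEq n]

theorem IsHermitian.trace_mul_eq_sum_eigenvalues_mul {G : Matrix n n ℝ} (hG : G.IsHermitian)
    (X : Matrix n n ℝ) :
    (G * X).trace = ∑ i, hG.eigenvalues i *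
      (star (hG.eigenvectorUnitary : Matrix n n ℝ) * X * hG.eigenvectorUnitary) i i := by
  set U : Matrix n n ℝ := ↑hG.eigenvectorUnitary
  conv_lhs => rw [hG.spectral_theorem, Unitary.conjStarAlgAut_apply]
  rw [Matrix.mul_assoc, Matrix.mul_assoc, trace_mul_comm, Matrix.mul_assoc]
  simp [Matrix.trace, diagonal_mul, U, Matrix.mul_assoc]

theorem PosSemidef.trace_mul_nonneg {A X : Matrix n n ℝ} (hA : A.PosSemidef)
    (hX : X.PosSemidef) : 0 ≤ (A * X).trace := by
  rw [hA.isHermitian.trace_mul_eq_sum_eigenvalues_mul]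
  exact Finset.sum_nonneg fun i _ =>
    mul_nonneg (hA.eigenvalues_nonneg i) (hX.conjTranspose_mul_mul_same _).diag_nonneg

theorem PosSemidef.trace_mul_mul_mul_nonneg {A d : Matrix n n ℝ} (hA : A.PosSemidef)
    (hd : d.IsHermitian) : 0 ≤ (A * d * A * d).trace := by
  have h := hA.trace_mul_nonneg (hA.conjTranspose_mul_mul_same d)
  rwa [hd.eq, ← Matrix.mul_assoc, ← Matrix.mul_assoc] at h

end Matrix

theorem gr_conj_diagonal_indicator {M : ℕ} {U : Matrix (Fin M) (Fin M) ℝ}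
    (hU : U ∈ unitaryGroup (Fin M) ℝ) (S : Finset (Fin M)) :
    Gr M S.card (U * diagonal (fun i => if i ∈ S then 1 else 0) * star U) := by
  set χ : Fin M → ℝ := fun i => if i ∈ S then 1 else 0
  have hUU : star U * U = 1 := mem_unitaryGroup_iff'.1 hU
  refine ⟨?_, ?_, ?_⟩
  · simpa [star_eq_conjTranspose] using isHermitian_mul_mul_conjTranspose U (isHermitian_diagonal χ)
  · have hχ : diagonal χ * diagonal χ = diagonal χ := by
      rw [diagonal_mul_diagonal]; congr 1; funext i; by_cases hi : i ∈ S <;> simp [χ, hi]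
    calc U * diagonal χ * star U * (U * diagonal χ * star U)
        = U * (diagonal χ * (star U * U) * diagonal χ) * star U := by simp only [Matrix.mul_assoc]
      _ = U * diagonal χ * star U := by rw [hUU, Matrix.mul_one, hχ]
  · rw [trace_mul_cycle, hUU, Matrix.one_mul, trace_diagonal]
    simp [χ]

theorem exists_gr_trace_mul_le {M m : ℕ} {G : Matrix (Fin M) (Fin M) ℝ} (hG : G.IsHermitian)
    {D : Matrix (Fin M) (Fin M) ℝ} (hD : Kset M m D) :
    ∃ Q, Gr M m Q ∧ (G * Q).trace ≤ (G * D).trace := by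
  set U : Matrix (Fin M) (Fin M) ℝ := ↑hG.eigenvectorUnitary
  have hU : U ∈ unitaryGroup (Fin M) ℝ := hG.eigenvectorUnitary.2
  have hUU : star U * U = 1 := mem_unitaryGroup_iff'.1 hU
  set w : Fin M → ℝ := fun i => (star U * D * U) i i
  have hw0 : ∀ i, 0 ≤ w i := fun i => (hD.1.conjTranspose_mul_mul_same U).diag_nonneg
  have hw1 : ∀ i, w i ≤ 1 := fun i => by
    have h := (hD.2.1.conjTranspose_mul_mul_same U).diag_nonneg (i := i)
    rw [Matrix.mul_sub, Matrix.sub_mul, Matrix.mul_one, ← star_eq_conjTranspose, hUU] at h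
    simpa [w] using h
  have hsum : ∑ i, w i = m := by
    change (star U * D * U).trace = m
    rw [trace_mul_cycle, mem_unitaryGroup_iff.1 hU, Matrix.one_mul, hD.2.2]
  obtain ⟨S, rfl, hS⟩ := exists_card_eq_sum_le_sum_mul hG.eigenvalues w hw0 hw1 hsum
  refine ⟨_, gr_conj_diagonal_indicator hU S, ?_⟩
  have hconj : star U * (U * diagonal (fun i => if i ∈ S then 1 else 0) * star U) * U
      = diagonal (fun i => if i ∈ S then 1 else 0) := by
    simp only [← Matrix.mul_assoc, hUU, Matrix.one_mul]
    rw [Matrix.mul_assoc, hUU, Matrix.mul_one]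
  rw [hG.trace_mul_eq_sum_eigenvalues_mul, hG.trace_mul_eq_sum_eigenvalues_mul, hconj]
  simpa [diagonal_apply_eq] using hS

theorem isHermitian_Gmap {M : ℕ} {A B D : Matrix (Fin M) (Fin M) ℝ} (hA : A.IsHermitian)
    (hB : B.IsHermitian) (hD : D.IsHermitian) : (Gmap A B D).IsHermitian := by
  have h := hB.sub (isHermitian_mul_mul_conjTranspose A hD)
  rwa [hA.eq] at h

theorem Jfun_add_smul {M : ℕ} (A B D d : Matrix (Fin M) (Fin M) ℝ) (α : ℝ) :
    Jfun A B (D + α • d) =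
      Jfun A B D + α * (Gmap A B D * d).trace - α ^ 2 / 2 * (A * d * A * d).trace := by
  have hcycle : (A * d * A * D).trace = (A * D * A * d).trace := by
    rw [trace_mul_cycle, ← Matrix.mul_assoc, trace_mul_cycle, ← Matrix.mul_assoc]
  simp only [Jfun, Gmap, Matrix.mul_add, Matrix.add_mul, Matrix.mul_smul, Matrix.smul_mul,
    Matrix.sub_mul, trace_add, trace_sub, trace_smul, smul_eq_mul, hcycle]
  ring

theorem stmt_16_general {M m : ℕ}
    (A B : Matrix (Fin M) (Fin M) ℝ) (hApsd : A.PosSemidef)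
    (hB : B.IsSymm) (D : Matrix (Fin M) (Fin M) ℝ) (hD : Kset M m D)
    (P : Matrix (Fin M) (Fin M) ℝ) (hP : Gr M m P)
    (hPmin : ∀ Q : Matrix (Fin M) (Fin M) ℝ, Gr M m Q →
      (Gmap A B D * P).trace ≤ (Gmap A B D * Q).trace) :
    ∀ α : ℝ, α ∈ Set.Icc (0 : ℝ) 1 →
      Jfun A B P ≤ Jfun A B ((1 - α) • D + α • P) := by
  rintro α ⟨hα0, hα1⟩
  have hDherm : D.IsHermitian := hD.1.isHermitian
  obtain ⟨Q, hQ, hQD⟩ := exists_gr_trace_mul_le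
    (isHermitian_Gmap hApsd.isHermitian (isHermitian_iff_isSymm.2 hB) hDherm) hD
  have hslope : (Gmap A B D * (P - D)).trace ≤ 0 := by
    rw [Matrix.mul_sub, trace_sub]
    linarith [hPmin Q hQ]
  have hcurv : 0 ≤ (A * (P - D) * A * (P - D)).trace :=
    hApsd.trace_mul_mul_mul_nonneg ((isHermitian_iff_isSymm.2 hP.1).sub hDherm)
  have hsegment : ∀ t : ℝ, (1 - t) • D + t • P = D + t • (P - D) := fun t => by module
  have hJP := Jfun_add_smul A B D (P - D) 1
  rw [← hsegment, sub_self, zero_smul, one_smul, zero_add] at hJP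
  rw [hsegment, Jfun_add_smul, hJP]
  nlinarith [mul_nonneg (sub_nonneg.2 hα1) (neg_nonneg.2 hslope),
    mul_nonneg (mul_nonneg (sub_nonneg.2 hα1) (by linarith : (0 : ℝ) ≤ 1 + α)) hcurv]

/-- if `D ∈ K` and `P ∈ Gr(m,ℝ^M)` minimizes `Q ↦ Tr(G(D)Q)` over
`Gr(m,ℝ^M)`, then `J((1−α)D + αP) ≥ J(P)` for every `α ∈ [0,1]`: the optimal damping
step of the ODA equals the full step `α = 1`. -/
theorem stmt_16 {M m : ℕ} (hM : 2 ≤ M) (hm1 : 1 ≤ m) (hm2 : m ≤ M - 1)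
    (A B : Matrix (Fin M) (Fin M) ℝ) (hA : A.IsSymm) (hApsd : A.PosSemidef)
    (hB : B.IsSymm) (D : Matrix (Fin M) (Fin M) ℝ) (hD : Kset M m D)
    (P : Matrix (Fin M) (Fin M) ℝ) (hP : Gr M m P)
    (hPmin : ∀ Q : Matrix (Fin M) (Fin M) ℝ, Gr M m Q →
      (Gmap A B D * P).trace ≤ (Gmap A B D * Q).trace) :
    ∀ α : ℝ, α ∈ Set.Icc (0 : ℝ) 1 →
      Jfun A B P ≤ Jfun A B ((1 - α) • D + α • P) :=
  stmt_16_general A B hApsd hB D hD P hP hPmin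
end
end
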